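/- For any vectors u, v ∈ ℂ^d with v ≠ 0, min_{θ ∈ [0,2π)} ‖u − e^{iθ} v‖ ≤ 2 ‖u u* − v v*‖_F / ‖v‖, where u u* and v v* denote the rank-one Hermitian matrices formed by the outer products. -/

import Mathlib

open MeasureTheory ProbabilityTheory Complex Matrix
open scoped InnerProductSpace ENNReal NNReal

noncomputable section

/-- Borel measurable structure on complex Euclidean space. -/
instance euclideanComplexMeasurableSpace {d : ℕ} :
    MeasurableSpace (EuclideanSpace ℂ (Fin d)) := MeasurableSpace.comap WithLp.ofLp MeasurableSpace.pi

/-- The standard complex Gaussian distribution on `ℂ`: the law of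
`X + i Y` with `X, Y` independent real Gaussians of mean `0` and variance `1/2`. -/
def stdCGaussian : Measure ℂ :=
  ((gaussianReal 0 (1/2)).prod (gaussianReal 0 (1/2))).map
    (fun p => (p.1 : ℂ) + (p.2 : ℂ) * Complex.I)

/-- The standard complex Gaussian distribution on `ℂ^d`
(i.i.d. standard complex Gaussian coordinates). -/
def stdCGaussianVec (d : ℕ) : Measure (EuclideanSpace ℂ (Fin d)) :=
  (Measure.pi (fun _ : Fin d => stdCGaussian)).map
    (⇑(EuclideanSpace.equiv (Fin d) ℂ).symm)

/-- The distance up to a global phase: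
`dist(x, y) = min_{θ} ‖x - e^{iθ} y‖`. -/
def distPhase {d : ℕ} (x y : EuclideanSpace ℂ (Fin d)) : ℝ :=
  ⨅ θ : ℝ, ‖x - Complex.exp (θ * Complex.I) • y‖

/-- The outer product `u v*`. -/
def outerProd {d : ℕ} (u v : EuclideanSpace ℂ (Fin d)) : Matrix (Fin d) (Fin d) ℂ :=
  Matrix.of fun i k => u i * (starRingEnd ℂ) (v k)

/-- The quadratic form `v* M v`. -/
def quadForm {d : ℕ} (M : Matrix (Fin d) (Fin d) ℂ) (v : EuclideanSpace ℂ (Fin d)) : ℂ :=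
  dotProduct (star (fun i => v i)) (M.mulVec (fun i => v i))

/-- The Frobenius norm of a complex matrix. -/
def frobNorm {d : ℕ} (M : Matrix (Fin d) (Fin d) ℂ) : ℝ :=
  Real.sqrt (∑ i, ∑ k, ‖M i k‖^2)

/-- The operator (spectral) norm of a complex matrix. -/
def opNorm {d : ℕ} (M : Matrix (Fin d) (Fin d) ℂ) : ℝ :=
  ‖Matrix.toEuclideanCLM (𝕜 := ℂ) M‖

/-- The ℓ¹-norm of a complex vector. -/
def l1Norm {d : ℕ} (x : EuclideanSpace ℂ (Fin d)) : ℝ := ∑ i, ‖x i‖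

/-- The sup-norm of a real vector. -/
def supNorm {m : ℕ} (η : EuclideanSpace ℝ (Fin m)) : ℝ := ⨆ j, |η j|

/-- The Rademacher distribution on `ℝ`: `±1` with probability `1/2` each. -/
def radMeasure : Measure ℝ :=
  (1/2 : ℝ≥0∞) • Measure.dirac 1 + (1/2 : ℝ≥0∞) • Measure.dirac (-1)

/-- The intensity-based empirical loss `x ↦ ∑ⱼ (|⟨aⱼ, x⟩|² - bⱼ)²`. -/
def intensityLoss {d m : ℕ} (a : Fin m → EuclideanSpace ℂ (Fin d))
    (b : Fin m → ℝ) (x : EuclideanSpace ℂ (Fin d)) : ℝ :=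
  ∑ j, (‖⟪a j, x⟫_ℂ‖^2 - b j)^2

/-!
Rotate `v` by the phase `e^{iθ}` that makes `⟪u, e^{iθ} v⟫` real and nonnegative. Then, with
`a = ‖u‖`, `b = ‖v‖` and `t = |⟪u, v⟫|`, the squared left side is `a² + b² - 2t` and the squared
Frobenius norm is `a⁴ + b⁴ - 2t²`, so the claim reduces to a polynomial inequality that holds
whenever `0 ≤ t ≤ ab` (Cauchy–Schwarz).
-/

open ComplexConjugate

theorem Complex.exp_neg_arg_mul_I_mul_self (z : ℂ) : exp (↑(-z.arg) * I) * z = ‖z‖ := by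
  conv_lhs => rw [← norm_mul_exp_arg_mul_I z]
  rw [mul_left_comm, ← exp_add]
  simp

theorem norm_sub_exp_neg_arg_inner_smul_sq {E : Type*} [SeminormedAddCommGroup E]
    [InnerProductSpace ℂ E] (u v : E) :
    ‖u - exp (↑(-(⟪u, v⟫_ℂ).arg) * I) • v‖ ^ 2 = ‖u‖ ^ 2 + ‖v‖ ^ 2 - 2 * ‖⟪u, v⟫_ℂ‖ := by
  rw [norm_sub_sq (𝕜 := ℂ), inner_smul_right, exp_neg_arg_mul_I_mul_self, norm_smul,
    norm_exp_ofReal_mul_I]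
  simp only [RCLike.re_to_complex, ofReal_re, one_mul]
  ring

theorem sum_sum_norm_mul_conj_sub_mul_conj_sq {ι : Type*} [Fintype ι] (u v : ι → ℂ) :
    ∑ i, ∑ k, ‖u i * conj (u k) - v i * conj (v k)‖ ^ 2 =
      (∑ i, ‖u i‖ ^ 2) ^ 2 + (∑ i, ‖v i‖ ^ 2) ^ 2 - 2 * ‖∑ i, conj (u i) * v i‖ ^ 2 := by
  set z := ∑ i, conj (u i) * v i with hz
  -- The two cross terms of the expansion are `conj z * z` and `z * conj z`, with `i, k` swapped.
  have two_mul_norm_sq : (2 : ℂ) * (‖z‖ : ℂ) ^ 2 = conj z * z + z * conj z := by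
    rw [mul_conj', conj_mul', two_mul]
  apply ofReal_injective
  push_cast
  rw [two_mul_norm_sq]
  simp only [← mul_conj', hz, map_sum, map_mul, map_sub, conj_conj]
  simp only [sq, Finset.sum_mul, Finset.mul_sum, ← Finset.sum_sub_distrib,
    ← Finset.sum_add_distrib]
  refine Finset.sum_congr rfl fun i _ => Finset.sum_congr rfl fun k _ => ?_
  ring

theorem frobNorm_outerProd_sub_outerProd_sq {d : ℕ} (u v : EuclideanSpace ℂ (Fin d)) :
    frobNorm (outerProd u u - outerProd v v) ^ 2 = ‖u‖ ^ 4 + ‖v‖ ^ 4 - 2 * ‖⟪u, v⟫_ℂ‖ ^ 2 := by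
  rw [frobNorm, Real.sq_sqrt (by positivity)]
  simp only [Matrix.sub_apply, outerProd, Matrix.of_apply]
  rw [sum_sum_norm_mul_conj_sub_mul_conj_sq, ← EuclideanSpace.norm_sq_eq,
    ← EuclideanSpace.norm_sq_eq, PiLp.inner_apply]
  simp only [RCLike.inner_apply']
  ring

theorem sq_add_sq_sub_two_mul_mul_sq_le {a b t : ℝ} (ht : 0 ≤ t) (hab : t ≤ a * b) :
    (a ^ 2 + b ^ 2 - 2 * t) * b ^ 2 ≤ 4 * (a ^ 4 + b ^ 4 - 2 * t ^ 2) := by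
  nlinarith [mul_nonneg (sub_nonneg.mpr hab) ht, sq_nonneg (a - b), sq_nonneg (a * b - t),
    sq_nonneg (a ^ 2 - b ^ 2)]

theorem distPhase_le {d : ℕ} (u v : EuclideanSpace ℂ (Fin d)) (θ : ℝ) :
    distPhase u v ≤ ‖u - exp (θ * I) • v‖ :=
  ciInf_le ⟨0, by rintro _ ⟨_, rfl⟩; exact norm_nonneg _⟩ θ

/-- the distance up to a global phase between two vectors is controlled by
the Frobenius distance of their outer products. -/
theorem distPhase_le_outer_frobenius (d : ℕ) (u v : EuclideanSpace ℂ (Fin d)) (hv : v ≠ 0) :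
    distPhase u v ≤ 2 * frobNorm (outerProd u u - outerProd v v) / ‖v‖ := by
  refine (distPhase_le u v (-(⟪u, v⟫_ℂ).arg)).trans ?_
  rw [le_div_iff₀ (norm_pos_iff.mpr hv), ← sq_le_sq₀ (by positivity)
    (by rw [frobNorm]; positivity), mul_pow, mul_pow,
    norm_sub_exp_neg_arg_inner_smul_sq, frobNorm_outerProd_sub_outerProd_sq]
  linarith [sq_add_sq_sub_two_mul_mul_sq_le (norm_nonneg ⟪u, v⟫_ℂ) (norm_inner_le_norm u v)]

end
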